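/- Let T be a finite tree with at least two vertices, equipped with an edge-length function ℓ assigning a strictly positive real length to each edge, and suppose (T, ℓ) is short-branched. Let v be a vertex of T which is not a leaf, let v̂ be a vertex of T distinct from v, and let v = v₁, v₂, …, v_n = v̂ be the unique path in T from v to v̂. Then the sum of the barycentric coordinates a(v,w), taken over all leaves w of T such that v̂ lies on the unique path in T from v to w, equals D(v_{n−1}, v̂) · ∏_{i=1}^{n−2} D(vᵢ, vᵢ₊₁)/(1 − D(vᵢ₊₁, vᵢ)). -/

import Mathlib

open scoped Classical
open Finset

noncomputable section

variable {V : Type*}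

/-- A leaf of a graph is a vertex of degree one. -/
def IsLeafVertex [Fintype V] (G : SimpleGraph V) (v : V) : Prop := G.degree v = 1

/-- The finset of leaves of a graph. -/
def leafSet [Fintype V] (G : SimpleGraph V) : Finset V :=
  Finset.univ.filter (fun v => IsLeafVertex G v)

/-- The length of a pseudometric graph: the sum of the lengths of its edges. -/
def totalLength [Fintype V] (G : SimpleGraph V) (ℓ : Sym2 V → ℝ) : ℝ :=
  ∑ e ∈ G.edgeFinset, ℓ e

/-- The leaf length of a tree: one less than its number of leaves. -/
def leafLength [Fintype V] (G : SimpleGraph V) : ℝ := ((leafSet G).card : ℝ) - 1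

/-- `sideComp G u v` is the vertex set of the connected component containing `v` of the
graph obtained from `G` by deleting the vertex `u`: the set of vertices reachable from
`v` by a walk avoiding `u`. -/
def sideComp (G : SimpleGraph V) (u v : V) : Set V :=
  {x | ∃ p : G.Walk v x, u ∉ p.support}

/-- The length of the subspace `T(u,v)`: the sum of the lengths of all edges having at
least one endpoint in `sideComp G u v`. -/
def sideLength [Fintype V] (G : SimpleGraph V) (ℓ : Sym2 V → ℝ) (u v : V) : ℝ :=
  ∑ e ∈ G.edgeFinset.filter (fun e => ∃ x ∈ e, x ∈ sideComp G u v), ℓ e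

/-- The leaf length of the subspace `T(u,v)`: the number of leaves of `G` lying in
`sideComp G u v`. -/
def sideLeafCount [Fintype V] (G : SimpleGraph V) (u v : V) : ℕ :=
  ((leafSet G).filter (fun x => x ∈ sideComp G u v)).card

/-- The deviation `D(u,v)`: the leaf length of `T(u,v)` minus the length of `T(u,v)`. -/
def deviation [Fintype V] (G : SimpleGraph V) (ℓ : Sym2 V → ℝ) (u v : V) : ℝ :=
  (sideLeafCount G u v : ℝ) - sideLength G ℓ u v

/-- The length of the branch at `(u,w)`: `ℓ {u,w}` plus the sum of the lengths of all
edges with both endpoints in `sideComp G u w`. -/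
def branchLength [Fintype V] (G : SimpleGraph V) (ℓ : Sym2 V → ℝ) (u w : V) : ℝ :=
  ℓ s(u, w) + ∑ e ∈ G.edgeFinset.filter (fun e => ∀ x ∈ e, x ∈ sideComp G u w), ℓ e

/-- A pseudometric tree is short-branched if its length equals its leaf length and the
length of every branch (at a vertex of degree at least 3) is at most its leaf length. -/
def ShortBranched [Fintype V] (G : SimpleGraph V) (ℓ : Sym2 V → ℝ) : Prop :=
  totalLength G ℓ = leafLength G ∧
  ∀ u w : V, 3 ≤ G.degree u → G.Adj u w →
    branchLength G ℓ u w ≤ (sideLeafCount G u w : ℝ)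

/-- The product of the factors `D(vᵢ, vᵢ₊₁)/(1 − D(vᵢ₊₁, vᵢ))` along a list of vertices;
applied to the support of the unique path from `v` to `w` this gives the barycentric
coordinate `a(v,w)`. -/
def pathProd [Fintype V] (G : SimpleGraph V) (ℓ : Sym2 V → ℝ) : List V → ℝ
  | a :: b :: rest =>
      (deviation G ℓ a b / (1 - deviation G ℓ b a)) * pathProd G ℓ (b :: rest)
  | _ => 1

/-!
Write `S(y,u)` for the sum of `a(v,w)` over the leaves `w` of `T(y,u)`, where `v` lies on the
`y` side of the edge `yu`; these are exactly the leaves whose path from `v` runs through `u`.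
In a tree the components `T(u,z)` of `T - u`, `z` a neighbour of `u`, partition both the
remaining vertices and the edges. Since the length of `T` equals its leaf length, this gives
`∑_z D(u,z) = 1` at a non-leaf `u`, `D(u,y) = 0` at a leaf `u`, and
`D(u,y) + D(y,u) = 1 - ℓ(uy)`; short branches then make every `D` nonnegative, so that
`1 - D(u,y) ≥ ℓ(uy) > 0`.

Now `S(y,u) = D(y,u) · a(v,y)` by induction from the leaves, using
`a(v,u) = a(v,y) · D(y,u) / (1 - D(u,y))`: at a leaf `u`, `S(y,u) = a(v,u)` and `D(u,y) = 0`;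
otherwise `S(y,u) = ∑_{z ≠ y} S(u,z) = a(v,u) ∑_{z ≠ y} D(u,z) = a(v,u) (1 - D(u,y))`.
-/

open SimpleGraph Walk

section Components

variable {G : SimpleGraph V} {u v w x y z : V}

theorem mem_sideComp_self (h : u ≠ v) : v ∈ sideComp G u v :=
  ⟨.nil, by simpa using h⟩

theorem notMem_sideComp_self (u v : V) : u ∉ sideComp G u v :=
  fun ⟨p, hp⟩ => hp p.end_mem_support

theorem ne_of_mem_sideComp (h : x ∈ sideComp G u v) : x ≠ u :=
  fun hxu => notMem_sideComp_self u v (hxu ▸ h)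

theorem mem_sideComp_of_adj (hx : x ∈ sideComp G u v) (hxy : G.Adj x y) (hy : y ≠ u) :
    y ∈ sideComp G u v := by
  obtain ⟨p, hp⟩ := hx
  refine ⟨p.concat hxy, ?_⟩
  simpa [support_concat, hp] using hy.symm

theorem sideComp_eq_of_mem (h : x ∈ sideComp G u v) : sideComp G u x = sideComp G u v := by
  obtain ⟨p, hp⟩ := h
  ext z
  constructor
  · rintro ⟨q, hq⟩
    exact ⟨p.append q, by simp [mem_support_append_iff, hp, hq]⟩
  · rintro ⟨r, hr⟩
    exact ⟨p.reverse.append r, by simp [mem_support_append_iff, hp, hr]⟩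

namespace SimpleGraph.IsAcyclic

variable (hG : G.IsAcyclic)
include hG

theorem mem_sideComp_iff {r : G.Walk v x} (hr : r.IsPath) :
    x ∈ sideComp G u v ↔ u ∉ r.support := by
  refine ⟨fun ⟨p, hp⟩ hu => ?_, fun hu => ⟨r, hu⟩⟩
  have hbyp : p.bypass = r :=
    congrArg Subtype.val ((hG.subsingleton_path _ _).elim ⟨_, p.bypass_isPath⟩ ⟨r, hr⟩)
  exact hp (p.support_bypass_subset_support (hbyp ▸ hu))

theorem disjoint_sideComp {z' : V} (hz : G.Adj u z) (hz' : G.Adj u z') (hne : z ≠ z') :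
    Disjoint (sideComp G u z) (sideComp G u z') := by
  refine Set.disjoint_left.2 fun x hx hx' => ?_
  have hz'z : z' ∈ sideComp G u z := by
    rw [← sideComp_eq_of_mem hx, sideComp_eq_of_mem hx']
    exact mem_sideComp_self hz'.ne
  have hpath : (cons hz.symm (cons hz' nil)).IsPath := by
    simp [cons_isPath_iff, hz.ne', hne, hz'.ne]
  exact (hG.mem_sideComp_iff hpath).1 hz'z (by simp)

theorem disjoint_sideComp_swap (h : G.Adj u v) : Disjoint (sideComp G u v) (sideComp G v u) := by
  refine Set.disjoint_left.2 fun x ⟨p, hp⟩ hx => ?_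
  have hpath : (cons h p.bypass).IsPath :=
    p.bypass_isPath.cons fun hu => hp (p.support_bypass_subset_support hu)
  exact (hG.mem_sideComp_iff hpath).1 hx (by simp)

theorem sideComp_subset (hyu : G.Adj y u) (huz : G.Adj u z) (hzy : z ≠ y) :
    sideComp G u z ⊆ sideComp G y u := by
  rintro x ⟨t, ht⟩
  have hy : y ∉ t.support := fun hy =>
    (hG.disjoint_sideComp huz hyu.symm hzy).notMem_of_mem_left
      ⟨t.takeUntil y hy, fun hu => ht (t.support_takeUntil_subset_support hy hu)⟩
      (mem_sideComp_self hyu.ne')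
  exact ⟨cons huz t, by simp [hyu.ne, hy]⟩

theorem ncard_sideComp_lt [Finite V] (hyu : G.Adj y u) (huz : G.Adj u z) (hzy : z ≠ y) :
    (sideComp G u z).ncard < (sideComp G y u).ncard :=
  Set.ncard_lt_ncard <| (Set.ssubset_iff_of_subset (hG.sideComp_subset hyu huz hzy)).2
    ⟨u, mem_sideComp_self hyu.ne, notMem_sideComp_self u z⟩

theorem isPath_concat_of_mem_sideComp (hyu : G.Adj y u) (hv : v ∈ sideComp G u y)
    {r : G.Walk v y} (hr : r.IsPath) : (r.concat hyu).IsPath := by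
  refine hr.concat ?_ hyu
  rw [← hG.mem_sideComp_iff hr, sideComp_eq_of_mem hv]
  exact mem_sideComp_self hyu.ne'

theorem eq_of_mem_sideComp_of_notMem {e : Sym2 V} (huz : G.Adj u z) (he : e ∈ G.edgeSet)
    (hx : x ∈ e) (hy : y ∈ e) (hxS : x ∈ sideComp G u z) (hyS : y ∉ sideComp G u z) :
    e = s(u, z) := by
  have hxy : x ≠ y := by rintro rfl; exact hyS hxS
  rw [(Sym2.mem_and_mem_iff hxy).1 ⟨hx, hy⟩] at he ⊢
  obtain rfl : y = u := by
    by_contra hyu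
    exact hyS (mem_sideComp_of_adj hxS he hyu)
  obtain rfl : x = z := by
    by_contra hxz
    exact (hG.disjoint_sideComp he.symm huz hxz).notMem_of_mem_left
      (mem_sideComp_self he.ne') hxS
  exact Sym2.eq_swap

end SimpleGraph.IsAcyclic

namespace SimpleGraph.IsTree

variable (hG : G.IsTree)
include hG

theorem exists_adj_mem_sideComp (h : x ≠ u) : ∃ z, G.Adj u z ∧ x ∈ sideComp G u z := by
  obtain ⟨r, hr, -⟩ := hG.existsUnique_path u x
  cases r with
  | nil => exact absurd rfl h
  | cons huz r' => exact ⟨_, huz, r', ((cons_isPath_iff _ _).1 hr).2⟩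

theorem mem_sideComp_iff_notMem_swap (h : G.Adj u v) :
    x ∈ sideComp G u v ↔ x ∉ sideComp G v u := by
  refine ⟨fun hx => (hG.isAcyclic.disjoint_sideComp_swap h).notMem_of_mem_left hx,
    fun hx => ?_⟩
  have hxu : x ≠ u := by rintro rfl; exact hx (mem_sideComp_self h.ne')
  obtain ⟨z, huz, hxz⟩ := hG.exists_adj_mem_sideComp hxu
  obtain rfl | hzv := eq_or_ne z v
  · exact hxz
  · exact absurd (hG.isAcyclic.sideComp_subset h.symm huz hzv hxz) hx

theorem mem_support_iff_mem_sideComp (hyu : G.Adj y u) (hv : v ∈ sideComp G u y)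
    {r : G.Walk v w} (hr : r.IsPath) : u ∈ r.support ↔ w ∈ sideComp G y u := by
  rw [hG.mem_sideComp_iff_notMem_swap hyu, ← sideComp_eq_of_mem hv,
    hG.isAcyclic.mem_sideComp_iff hr, not_not]

end SimpleGraph.IsTree

end Components

section Sums

variable [Fintype V] {G : SimpleGraph V} {ℓ : Sym2 V → ℝ} {u v x y : V}

theorem mem_leafSet : x ∈ leafSet G ↔ IsLeafVertex G x := by
  simp [leafSet]

theorem neighborFinset_eq_singleton_of_leaf (hu : IsLeafVertex G u) (h : G.Adj u v) :
    G.neighborFinset u = {v} := by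
  obtain ⟨a, ha⟩ := Finset.card_eq_one.1 hu
  have hv : v ∈ G.neighborFinset u := by simpa using h
  rw [ha, Finset.mem_singleton] at hv
  rw [ha, hv]

namespace SimpleGraph.IsAcyclic

variable (hG : G.IsAcyclic)
include hG

theorem pairwiseDisjoint_filter_sideComp (s : Finset V) (u : V) :
    (G.neighborFinset u : Set V).PairwiseDisjoint fun z => s.filter (· ∈ sideComp G u z) := by
  intro z hz z' hz' hne
  refine Finset.disjoint_left.2 fun x hx hx' => ?_
  exact (hG.disjoint_sideComp (by simpa using hz) (by simpa using hz') hne).notMem_of_mem_left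
    (Finset.mem_filter.1 hx).2 (Finset.mem_filter.1 hx').2

theorem sideLength_eq_branchLength (h : G.Adj u v) :
    sideLength G ℓ u v = branchLength G ℓ u v := by
  have hedges : G.edgeFinset.filter (fun e => ∃ x ∈ e, x ∈ sideComp G u v) =
      insert s(u, v) (G.edgeFinset.filter fun e => ∀ x ∈ e, x ∈ sideComp G u v) := by
    ext e
    simp only [Finset.mem_insert, Finset.mem_filter, mem_edgeFinset]
    constructor
    · rintro ⟨he, x, hx, hxS⟩
      by_cases hall : ∀ y ∈ e, y ∈ sideComp G u v
      · exact Or.inr ⟨he, hall⟩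
      · push Not at hall
        obtain ⟨y, hy, hyS⟩ := hall
        exact Or.inl (hG.eq_of_mem_sideComp_of_notMem h he hx hy hxS hyS)
    · rintro (rfl | ⟨he, hall⟩)
      · exact ⟨h, v, Sym2.mem_mk_right u v, mem_sideComp_self h.ne⟩
      · exact ⟨he, e.out.1, Sym2.out_fst_mem e, hall _ (Sym2.out_fst_mem e)⟩
  rw [sideLength, hedges, Finset.sum_insert, branchLength]
  simp only [Finset.mem_filter, not_and]
  exact fun _ hall => notMem_sideComp_self u v (hall u (Sym2.mem_mk_left u v))

end SimpleGraph.IsAcyclic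

namespace SimpleGraph.IsTree

variable (hG : G.IsTree)
include hG

theorem biUnion_filter_sideComp (s : Finset V) (u : V) :
    (G.neighborFinset u).biUnion (fun z => s.filter (· ∈ sideComp G u z)) = s.erase u := by
  ext x
  simp only [Finset.mem_biUnion, Finset.mem_filter, mem_neighborFinset, Finset.mem_erase]
  constructor
  · rintro ⟨z, -, hx, hxz⟩
    exact ⟨ne_of_mem_sideComp hxz, hx⟩
  · rintro ⟨hxu, hx⟩
    obtain ⟨z, huz, hxz⟩ := hG.exists_adj_mem_sideComp hxu
    exact ⟨z, huz, hx, hxz⟩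

theorem erase_filter_sideComp (hyu : G.Adj y u) (s : Finset V) :
    (s.filter (· ∈ sideComp G y u)).erase u =
      ((G.neighborFinset u).erase y).biUnion (fun z => s.filter (· ∈ sideComp G u z)) := by
  ext x
  simp only [Finset.mem_biUnion, Finset.mem_filter, mem_neighborFinset, Finset.mem_erase]
  constructor
  · rintro ⟨hxu, hx, hxS⟩
    obtain ⟨z, huz, hxz⟩ := hG.exists_adj_mem_sideComp hxu
    refine ⟨z, ⟨?_, huz⟩, hx, hxz⟩
    rintro rfl
    exact (hG.isAcyclic.disjoint_sideComp_swap hyu).notMem_of_mem_left hxS hxz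
  · rintro ⟨z, ⟨hzy, huz⟩, hx, hxz⟩
    exact ⟨ne_of_mem_sideComp hxz, hx, hG.isAcyclic.sideComp_subset hyu huz hzy hxz⟩

theorem sum_sideLeafCount (u : V) :
    ∑ z ∈ G.neighborFinset u, sideLeafCount G u z = ((leafSet G).erase u).card := by
  rw [← hG.biUnion_filter_sideComp,
    Finset.card_biUnion (hG.isAcyclic.pairwiseDisjoint_filter_sideComp _ u)]
  rfl

theorem sideLeafCount_add_swap (h : G.Adj u v) :
    sideLeafCount G u v + sideLeafCount G v u = (leafSet G).card := by
  rw [sideLeafCount, sideLeafCount,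
    ← Finset.card_filter_add_card_filter_not (s := leafSet G) (p := (· ∈ sideComp G u v))]
  congr 2
  exact Finset.filter_congr fun x _ => hG.mem_sideComp_iff_notMem_swap h.symm

theorem sum_sideLength (u : V) :
    ∑ z ∈ G.neighborFinset u, sideLength G ℓ u z = totalLength G ℓ := by
  have hcover : (G.neighborFinset u).biUnion
      (fun z => G.edgeFinset.filter fun e => ∃ x ∈ e, x ∈ sideComp G u z) = G.edgeFinset := by
    ext e
    simp only [Finset.mem_biUnion, Finset.mem_filter, mem_neighborFinset]
    refine ⟨fun ⟨_, _, he, _⟩ => he, fun he => ?_⟩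
    induction e using Sym2.ind with
    | _ a b =>
      have hab : G.Adj a b := by simpa using he
      obtain rfl | hau := eq_or_ne a u
      · exact ⟨b, hab, he, b, Sym2.mem_mk_right a b, mem_sideComp_self hab.ne⟩
      · obtain ⟨z, huz, haz⟩ := hG.exists_adj_mem_sideComp hau
        exact ⟨z, huz, he, a, Sym2.mem_mk_left a b, haz⟩
  rw [totalLength, ← hcover, Finset.sum_biUnion]
  · rfl
  intro z hz z' hz' hne
  refine Finset.disjoint_left.2 fun e he he' => hne ?_
  obtain ⟨he, x, hx, hxS⟩ := Finset.mem_filter.1 he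
  obtain ⟨-, x', hx', hx'S⟩ := Finset.mem_filter.1 he'
  replace hz : G.Adj u z := by simpa using hz
  replace hz' : G.Adj u z' := by simpa using hz'
  replace he : e ∈ G.edgeSet := mem_edgeFinset.1 he
  have hdisj := hG.isAcyclic.disjoint_sideComp hz hz' hne
  have h₁ := hG.isAcyclic.eq_of_mem_sideComp_of_notMem hz he hx hx' hxS
    (hdisj.notMem_of_mem_right hx'S)
  have h₂ := hG.isAcyclic.eq_of_mem_sideComp_of_notMem hz' he hx' hx hx'S
    (hdisj.notMem_of_mem_left hxS)
  exact Sym2.congr_right.1 (h₁.symm.trans h₂)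

theorem sideLength_add_swap (h : G.Adj u v) :
    sideLength G ℓ u v + sideLength G ℓ v u = totalLength G ℓ + ℓ s(u, v) := by
  have hunion : G.edgeFinset.filter (fun e => ∃ x ∈ e, x ∈ sideComp G u v) ∪
      G.edgeFinset.filter (fun e => ∃ x ∈ e, x ∈ sideComp G v u) = G.edgeFinset := by
    rw [Finset.filter_union_right]
    refine Finset.filter_true_of_mem fun e _ => ?_
    by_cases he : e.out.1 ∈ sideComp G u v
    · exact Or.inl ⟨_, Sym2.out_fst_mem e, he⟩
    · exact Or.inr ⟨_, Sym2.out_fst_mem e, (hG.mem_sideComp_iff_notMem_swap h.symm).2 he⟩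
  have hinter : G.edgeFinset.filter (fun e => ∃ x ∈ e, x ∈ sideComp G u v) ∩
      G.edgeFinset.filter (fun e => ∃ x ∈ e, x ∈ sideComp G v u) = {s(u, v)} := by
    ext e
    simp only [Finset.mem_inter, Finset.mem_filter, Finset.mem_singleton, mem_edgeFinset]
    constructor
    · rintro ⟨⟨he, x, hx, hxS⟩, -, y, hy, hyS⟩
      exact hG.isAcyclic.eq_of_mem_sideComp_of_notMem h he hx hy hxS
        ((hG.isAcyclic.disjoint_sideComp_swap h).notMem_of_mem_right hyS)
    · rintro rfl
      exact ⟨⟨h, v, Sym2.mem_mk_right u v, mem_sideComp_self h.ne⟩,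
        h, u, Sym2.mem_mk_left u v, mem_sideComp_self h.ne'⟩
  rw [sideLength, sideLength, ← Finset.sum_union_inter, hunion, hinter, Finset.sum_singleton,
    totalLength]

end SimpleGraph.IsTree

end Sums

section Deviation

variable [Fintype V] {G : SimpleGraph V} {ℓ : Sym2 V → ℝ} {u v : V}

namespace SimpleGraph.IsTree

variable (hG : G.IsTree)
include hG

theorem sum_deviation (hlen : totalLength G ℓ = leafLength G) (u : V) :
    ∑ z ∈ G.neighborFinset u, deviation G ℓ u z =
      ((leafSet G).erase u).card - leafLength G := by
  simp only [deviation, Finset.sum_sub_distrib, ← Nat.cast_sum, hG.sum_sideLeafCount,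
    hG.sum_sideLength, hlen]

theorem sum_deviation_of_not_leaf (hlen : totalLength G ℓ = leafLength G)
    (hu : ¬IsLeafVertex G u) : ∑ z ∈ G.neighborFinset u, deviation G ℓ u z = 1 := by
  rw [hG.sum_deviation hlen, Finset.erase_eq_of_notMem (mt mem_leafSet.1 hu), leafLength]
  ring

theorem deviation_eq_zero_of_leaf (hlen : totalLength G ℓ = leafLength G)
    (hu : IsLeafVertex G u) (h : G.Adj u v) : deviation G ℓ u v = 0 := by
  have hsum := hG.sum_deviation hlen u
  rwa [neighborFinset_eq_singleton_of_leaf hu h, Finset.sum_singleton,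
    Finset.card_erase_of_mem (mem_leafSet.2 hu), leafLength,
    Nat.cast_sub (Finset.card_pos.2 ⟨u, mem_leafSet.2 hu⟩), Nat.cast_one, sub_self] at hsum

theorem deviation_add_swap (hlen : totalLength G ℓ = leafLength G) (h : G.Adj u v) :
    deviation G ℓ u v + deviation G ℓ v u = 1 - ℓ s(u, v) := by
  have hcount : (sideLeafCount G u v : ℝ) + sideLeafCount G v u = (leafSet G).card := by
    exact_mod_cast hG.sideLeafCount_add_swap h
  have hlength := hG.sideLength_add_swap (ℓ := ℓ) h
  rw [hlen, leafLength] at hlength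
  simp only [deviation]
  linarith

/-- Across a vertex of degree two the deviation grows by the length of the edge, so it
is nonnegative by induction towards the leaves; at a leaf it vanishes, and at a vertex of
degree at least three it is nonnegative because branches are short. -/
theorem deviation_nonneg {u v : V} (hℓ : ∀ e ∈ G.edgeSet, 0 ≤ ℓ e)
    (hsb : ShortBranched G ℓ) (h : G.Adj u v) : 0 ≤ deviation G ℓ u v := by
  have hv : v ∈ G.neighborFinset u := by simpa using h
  have hdeg : 0 < G.degree u := Finset.card_pos.2 ⟨v, hv⟩
  obtain hleaf | hdeg2 | hdeg3 : G.degree u = 1 ∨ G.degree u = 2 ∨ 3 ≤ G.degree u := by omega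
  · exact (hG.deviation_eq_zero_of_leaf hsb.1 hleaf h).ge
  · obtain ⟨c, hc⟩ := Finset.card_eq_one.1 <| by
      rw [Finset.card_erase_of_mem hv, card_neighborFinset_eq_degree, hdeg2]
    have hcmem : c ∈ (G.neighborFinset u).erase v := hc ▸ Finset.mem_singleton_self c
    obtain ⟨hcv, huc⟩ : c ≠ v ∧ G.Adj u c := by simpa using hcmem
    have hsum := hG.sum_deviation_of_not_leaf hsb.1 (by rw [IsLeafVertex, hdeg2]; decide)
    rw [← Finset.add_sum_erase _ _ hv, hc, Finset.sum_singleton] at hsum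
    have := hG.deviation_add_swap hsb.1 huc
    have := deviation_nonneg hℓ hsb huc.symm
    have := hℓ _ (G.mem_edgeSet.2 huc)
    linarith
  · have := hsb.2 u v hdeg3 h
    rw [deviation, hG.isAcyclic.sideLength_eq_branchLength h]
    linarith
termination_by (sideComp G v u).ncard
decreasing_by exact hG.isAcyclic.ncard_sideComp_lt h.symm huc hcv

theorem one_sub_deviation_pos (hℓ : ∀ e ∈ G.edgeSet, 0 < ℓ e) (hsb : ShortBranched G ℓ)
    (h : G.Adj u v) : 0 < 1 - deviation G ℓ v u := by
  have := hG.deviation_add_swap hsb.1 h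
  have := hG.deviation_nonneg (fun e he => (hℓ e he).le) hsb h
  have := hℓ _ (G.mem_edgeSet.2 h)
  linarith

end SimpleGraph.IsTree

end Deviation

section BarycentricCoordinates

variable [Fintype V] {G : SimpleGraph V} {ℓ : Sym2 V → ℝ} {u v w y : V}

theorem pathProd_cons_support (a : V) (q : G.Walk v w) :
    pathProd G ℓ (a :: q.support) =
      deviation G ℓ a v / (1 - deviation G ℓ v a) * pathProd G ℓ q.support := by
  cases q <;> rfl

theorem pathProd_support_concat (q : G.Walk v y) (h : G.Adj y u) :
    pathProd G ℓ (q.concat h).support =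
      pathProd G ℓ q.support * (deviation G ℓ y u / (1 - deviation G ℓ u y)) := by
  induction q with
  | nil => simp [pathProd]
  | cons hadj q ih =>
    rw [concat_cons, support_cons, support_cons, pathProd_cons_support, pathProd_cons_support,
      ih, mul_assoc]

theorem SimpleGraph.IsTree.sum_pathProd_leaves_sideComp {u v y : V} (hG : G.IsTree)
    (hℓ : ∀ e ∈ G.edgeSet, 0 < ℓ e) (hsb : ShortBranched G ℓ) (p : ∀ w : V, G.Walk v w)
    (hp : ∀ w, (p w).IsPath) (hyu : G.Adj y u) (hv : v ∈ sideComp G u y) :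
    ∑ w ∈ (leafSet G).filter (· ∈ sideComp G y u), pathProd G ℓ (p w).support =
      deviation G ℓ y u * pathProd G ℓ (p y).support := by
  have hpu : p u = (p y).concat hyu := (hG.existsUnique_path v u).unique (hp u)
    (hG.isAcyclic.isPath_concat_of_mem_sideComp hyu hv (hp y))
  by_cases hu : IsLeafVertex G u
  · have hN : (G.neighborFinset u).erase y = ∅ := by
      rw [neighborFinset_eq_singleton_of_leaf hu hyu.symm, Finset.erase_singleton]
    have humem : u ∈ (leafSet G).filter (· ∈ sideComp G y u) :=
      Finset.mem_filter.2 ⟨mem_leafSet.2 hu, mem_sideComp_self hyu.ne⟩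
    rw [← Finset.add_sum_erase _ _ humem, hG.erase_filter_sideComp hyu, hN,
      Finset.biUnion_empty, Finset.sum_empty, add_zero, hpu, pathProd_support_concat,
      hG.deviation_eq_zero_of_leaf hsb.1 hu hyu.symm]
    ring
  · have hsubtree : ∀ z ∈ (G.neighborFinset u).erase y,
        ∑ w ∈ (leafSet G).filter (· ∈ sideComp G u z), pathProd G ℓ (p w).support =
          deviation G ℓ u z * pathProd G ℓ (p u).support := by
      intro z hz
      obtain ⟨hzy, huz⟩ : z ≠ y ∧ G.Adj u z := by simpa using hz
      exact sum_pathProd_leaves_sideComp hG hℓ hsb p hp huz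
        (hG.isAcyclic.sideComp_subset huz.symm hyu.symm hzy.symm hv)
    have hsum : ∑ z ∈ (G.neighborFinset u).erase y, deviation G ℓ u z =
        1 - deviation G ℓ u y := by
      rw [Finset.sum_erase_eq_sub (by simpa using hyu.symm),
        hG.sum_deviation_of_not_leaf hsb.1 hu]
    rw [← Finset.erase_eq_of_notMem fun h => hu (mem_leafSet.1 (Finset.mem_filter.1 h).1),
      hG.erase_filter_sideComp hyu,
      Finset.sum_biUnion ((hG.isAcyclic.pairwiseDisjoint_filter_sideComp _ u).subset
        (Finset.coe_subset.2 (Finset.erase_subset _ _))),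
      Finset.sum_congr rfl hsubtree, ← Finset.sum_mul, hsum, hpu, pathProd_support_concat]
    field_simp [(hG.one_sub_deviation_pos hℓ hsb hyu).ne']
termination_by (sideComp G y u).ncard
decreasing_by exact hG.isAcyclic.ncard_sideComp_lt hyu huz hzy

end BarycentricCoordinates

theorem sum_barycentric_through_vertex_general [Fintype V] [DecidableEq V] (G : SimpleGraph V)
    (ℓ : Sym2 V → ℝ) (hT : G.IsTree)
    (hℓ : ∀ e ∈ G.edgeSet, 0 < ℓ e) (hsb : ShortBranched G ℓ)
    (v : V) (u : V)
    (y : V) (q₁ : G.Walk v y) (hadj : G.Adj y u) (hq : (q₁.concat hadj).IsPath)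
    (p : ∀ w : V, G.Walk v w) (hp : ∀ w, (p w).IsPath) :
    ∑ w ∈ (leafSet G).filter (fun w => u ∈ (p w).support),
        pathProd G ℓ (p w).support
      = deviation G ℓ y u * pathProd G ℓ q₁.support := by
  obtain ⟨hq₁, hu⟩ := (concat_isPath_iff hadj).1 hq
  have hv : v ∈ sideComp G u y := ⟨q₁.reverse, by simpa using hu⟩
  rw [Finset.filter_congr fun w _ => hT.mem_support_iff_mem_sideComp hadj hv (hp w),
    hT.sum_pathProd_leaves_sideComp hℓ hsb p hp hadj hv,
    (hT.existsUnique_path v y).unique (hp y) hq₁]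

/-- **The generalized summation identity** from the proof of the paper's Lemma A.8: in a
short-branched tree with strictly positive edge lengths, let `v` be a non-leaf vertex and
let `v = v₁, …, vₙ = u` be the unique path from `v` to a vertex `u ≠ v` (written as the
path `q₁` from `v` to the penultimate vertex `y = vₙ₋₁` followed by the edge `y–u`).
Then the sum of the barycentric coordinates `a(v,w)` over all leaves `w` such that `u`
lies on the unique path from `v` to `w` equals
`D(vₙ₋₁, u) · ∏_{i=1}^{n-2} D(vᵢ,vᵢ₊₁)/(1 - D(vᵢ₊₁,vᵢ))`. -/
theorem sum_barycentric_through_vertex [Fintype V] [DecidableEq V] (G : SimpleGraph V)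
    (ℓ : Sym2 V → ℝ) (hT : G.IsTree) (hV : 1 < Fintype.card V)
    (hℓ : ∀ e ∈ G.edgeSet, 0 < ℓ e) (hsb : ShortBranched G ℓ)
    (v : V) (hv : ¬ IsLeafVertex G v) (u : V) (huv : u ≠ v)
    (y : V) (q₁ : G.Walk v y) (hadj : G.Adj y u) (hq : (q₁.concat hadj).IsPath)
    (p : ∀ w : V, G.Walk v w) (hp : ∀ w, (p w).IsPath) :
    ∑ w ∈ (leafSet G).filter (fun w => u ∈ (p w).support),
        pathProd G ℓ (p w).support
      = deviation G ℓ y u * pathProd G ℓ q₁.support :=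
  sum_barycentric_through_vertex_general G ℓ hT hℓ hsb v u y q₁ hadj hq p hp
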